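/- Let A and B be nearly simple algebras over a field F, with unique non-trivial ideals I_A and I_B. If every two-sided ideal of A ⊗ B is admissible, then Z(A/I_A) ⊗ Z(B/I_B) is a field, where Z(A/I_A) and Z(B/I_B) are the centers of the simple quotient algebras A/I_A and B/I_B. -/

import Mathlib

/-!
Pulling back an ideal of `A/I_A ⊗ B/I_B` to `A ⊗ B` gives an admissible ideal containing
`x ⊗ 1` and `1 ⊗ y` for nonzero `x ∈ I_A`, `y ∈ I_B`. Contracting against a functional that
kills `I_B` (resp. `I_A`) and is `1` at `1` rules out every admissible ideal except `A ⊗ B` and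
the kernel `I_A ⊗ B + A ⊗ I_B`. Hence `A/I_A ⊗ B/I_B` is simple, so its center is a field, and
over a field the center of a tensor product is the tensor product of the centers.
-/

open TensorProduct

/-- `A` is nearly simple with unique non-trivial two-sided ideal `I`. -/
def IsNearlySimpleWith {A : Type*} [Ring A] (I : TwoSidedIdeal A) : Prop :=
  I ≠ ⊥ ∧ I ≠ ⊤ ∧
    (∀ J : TwoSidedIdeal A, J ≠ ⊥ → J ≠ ⊤ → J = I) ∧
    (∃ x ∈ I, ∃ y ∈ I, x * y ≠ 0)

/-- The `F`-subspace of `A ⊗[F] B` spanned by elementary tensors `x ⊗ y` with `x ∈ S`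
and `y ∈ T`. -/
def tmulSpan (F : Type*) {A B : Type*} [Field F] [Ring A] [Algebra F A] [Ring B]
    [Algebra F B] (S : Set A) (T : Set B) : Submodule F (A ⊗[F] B) :=
  Submodule.span F {t : A ⊗[F] B | ∃ x ∈ S, ∃ y ∈ T, t = x ⊗ₜ[F] y}

/-- A two-sided ideal of `A ⊗[F] B` is admissible if it is `{0}`, `A ⊗ B`, `I_A ⊗ I_B`,
`I_A ⊗ B`, `A ⊗ I_B`, or `I_A ⊗ B + A ⊗ I_B`. -/
def Admissible (F : Type*) {A B : Type*} [Field F] [Ring A] [Algebra F A] [Ring B]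
    [Algebra F B] (IA : TwoSidedIdeal A) (IB : TwoSidedIdeal B)
    (J : TwoSidedIdeal (A ⊗[F] B)) : Prop :=
  J = ⊥ ∨ J = ⊤ ∨
  (J : Set (A ⊗[F] B)) = ↑(tmulSpan F (IA : Set A) (IB : Set B)) ∨
  (J : Set (A ⊗[F] B)) = ↑(tmulSpan F (IA : Set A) (Set.univ : Set B)) ∨
  (J : Set (A ⊗[F] B)) = ↑(tmulSpan F (Set.univ : Set A) (IB : Set B)) ∨
  (J : Set (A ⊗[F] B)) =
    ↑(tmulSpan F (IA : Set A) (Set.univ : Set B) ⊔ tmulSpan F (Set.univ : Set A) (IB : Set B))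

theorem IsSimpleRing.of_surjective_of_ker_le {R S G : Type*} [Ring R] [Ring S] [Nontrivial S]
    [FunLike G R S] [RingHomClass G R S] (f : G) (hf : Function.Surjective f)
    (h : ∀ J : TwoSidedIdeal R, TwoSidedIdeal.ker f ≤ J → J = TwoSidedIdeal.ker f ∨ J = ⊤) :
    IsSimpleRing S := by
  refine .of_eq_bot_or_eq_top fun I =>
    (h (I.comap f) fun x hx => ?_).imp (fun hI => ?_) fun hI => ?_
  · rw [TwoSidedIdeal.mem_comap f, (TwoSidedIdeal.mem_ker f).1 hx]
    exact I.zero_mem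
  · refine eq_bot_iff.2 fun s hs => ?_
    obtain ⟨r, rfl⟩ := hf s
    have hr : r ∈ TwoSidedIdeal.ker f := hI ▸ (TwoSidedIdeal.mem_comap f).2 hs
    exact (TwoSidedIdeal.mem_bot S).2 ((TwoSidedIdeal.mem_ker f).1 hr)
  · refine eq_top_iff.2 fun s _ => ?_
    obtain ⟨r, rfl⟩ := hf s
    exact (TwoSidedIdeal.mem_comap f).1 (hI ▸ TwoSidedIdeal.mem_top R)

theorem TwoSidedIdeal.nontrivial_of_ne_top {R S G : Type*} [Ring R] [Ring S] [FunLike G R S]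
    [RingHomClass G R S] {I : TwoSidedIdeal R} (hI : I ≠ ⊤) {f : G}
    (hf : ∀ x, f x = 0 ↔ x ∈ I) : Nontrivial S :=
  nontrivial_of_ne 1 0 fun h => hI (I.one_mem_iff.1 ((hf 1).1 (by rw [map_one, h])))

theorem TwoSidedIdeal.one_notMem_span {F A : Type*} [Field F] [Ring A] [Algebra F A]
    {I : TwoSidedIdeal A} (hI : I ≠ ⊤) : (1 : A) ∉ Submodule.span F (I : Set A) := by
  have hspan : Submodule.span F (I : Set A) ≤ (asIdeal I).restrictScalars F :=
    Submodule.span_le.2 fun x hx => mem_asIdeal.2 hx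
  exact fun h => hI (I.one_mem_iff.1 (mem_asIdeal.1 (hspan h)))

section tmulSpan

variable {F A B : Type*} [Field F] [Ring A] [Algebra F A] [Ring B] [Algebra F B]

theorem tmulSpan_le_ker {M : Type*} [AddCommGroup M] [Module F M] {S : Set A} {T : Set B}
    (φ : A ⊗[F] B →ₗ[F] M) (h : ∀ x ∈ S, ∀ y ∈ T, φ (x ⊗ₜ y) = 0) :
    tmulSpan F S T ≤ LinearMap.ker φ :=
  Submodule.span_le.2 fun _ ⟨x, hx, y, hy, ht⟩ => ht ▸ h x hx y hy

theorem eq_zero_of_tmul_mem_tmulSpan_right {S : Set A} {T : Set B} {x : A} {b : B}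
    (hb : b ∉ Submodule.span F T) (h : x ⊗ₜ[F] b ∈ tmulSpan F S T) : x = 0 := by
  obtain ⟨f, hfb, hfT⟩ := Submodule.exists_dual_map_eq_bot_of_notMem hb inferInstance
  have hf : ∀ y ∈ T, f y = 0 := fun y hy => by
    simpa [hfT] using Submodule.mem_map_of_mem (f := f) (Submodule.subset_span hy)
  let contract : A ⊗[F] B →ₗ[F] A := (TensorProduct.rid F A).toLinearMap ∘ₗ f.lTensor A
  have hx := tmulSpan_le_ker contract (fun x _ y hy => by simp [contract, hf y hy]) h
  simp only [LinearMap.mem_ker, contract, LinearMap.coe_comp, LinearEquiv.coe_coe,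
    Function.comp_apply, LinearMap.lTensor_tmul, TensorProduct.rid_tmul] at hx
  exact (smul_eq_zero.1 hx).resolve_left hfb

theorem eq_zero_of_tmul_mem_tmulSpan_left {S : Set A} {T : Set B} {a : A} {y : B}
    (ha : a ∉ Submodule.span F S) (h : a ⊗ₜ[F] y ∈ tmulSpan F S T) : y = 0 := by
  obtain ⟨f, hfa, hfS⟩ := Submodule.exists_dual_map_eq_bot_of_notMem ha inferInstance
  have hf : ∀ x ∈ S, f x = 0 := fun x hx => by
    simpa [hfS] using Submodule.mem_map_of_mem (f := f) (Submodule.subset_span hx)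
  let contract : A ⊗[F] B →ₗ[F] B := (TensorProduct.lid F B).toLinearMap ∘ₗ f.rTensor B
  have hy := tmulSpan_le_ker contract (fun x hx y _ => by simp [contract, hf x hx]) h
  simp only [LinearMap.mem_ker, contract, LinearMap.coe_comp, LinearEquiv.coe_coe,
    Function.comp_apply, LinearMap.rTensor_tmul, TensorProduct.lid_tmul] at hy
  exact (smul_eq_zero.1 hy).resolve_left hfa

theorem Admissible.eq_top_or_eq_sup {IA : TwoSidedIdeal A} {IB : TwoSidedIdeal B}
    (hIA : IA ≠ ⊤) (hIB : IB ≠ ⊤) {J : TwoSidedIdeal (A ⊗[F] B)}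
    (hJ : Admissible F IA IB J)
    {x : A} {y : B} (hx : x ≠ 0) (hy : y ≠ 0) (hxJ : x ⊗ₜ[F] (1 : B) ∈ J)
    (hyJ : (1 : A) ⊗ₜ[F] y ∈ J) :
    J = ⊤ ∨ (J : Set (A ⊗[F] B)) = ↑(tmulSpan F (IA : Set A) Set.univ ⊔
      tmulSpan F Set.univ (IB : Set B)) := by
  have h1A := TwoSidedIdeal.one_notMem_span (F := F) hIA
  have h1B := TwoSidedIdeal.one_notMem_span (F := F) hIB
  rw [← SetLike.mem_coe] at hxJ hyJ
  rcases hJ with rfl | rfl | hJ | hJ | hJ | hJ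
  · refine absurd (eq_zero_of_tmul_mem_tmulSpan_right (S := IA) h1B ?_) hx
    rw [(TwoSidedIdeal.mem_bot _).1 (SetLike.mem_coe.1 hxJ)]
    exact zero_mem _
  · exact .inl rfl
  · exact absurd (eq_zero_of_tmul_mem_tmulSpan_right h1B (hJ ▸ hxJ)) hx
  · exact absurd (eq_zero_of_tmul_mem_tmulSpan_left h1A (hJ ▸ hyJ)) hy
  · exact absurd (eq_zero_of_tmul_mem_tmulSpan_right h1B (hJ ▸ hxJ)) hx
  · exact .inr hJ

end tmulSpan

namespace Algebra.TensorProduct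

variable {F A B : Type*} [Field F] [Ring A] [Algebra F A] [Ring B] [Algebra F B]

theorem map_injective_of_injective {C D : Type*} [Ring C] [Algebra F C] [Ring D] [Algebra F D]
    {f : A →ₐ[F] C} {g : B →ₐ[F] D} (hf : Function.Injective f)
    (hg : Function.Injective g) :
    Function.Injective (map f g) := by
  rw [← AlgHom.coe_toLinearMap, toLinearMap_map]
  exact TensorProduct.map_injective_of_flat_flat _ _ hf hg

variable (F A B) in
theorem center_eq_range_map_center :
    Subalgebra.center F (A ⊗[F] B) =
      (map (Subalgebra.center F A).val (Subalgebra.center F B).val).range := by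
  refine le_antisymm (fun u hu => ?_) ?_
  · have hu₁ : u ∈ (map (Subalgebra.center F A).val (AlgHom.id F B)).range := by
      rw [← Subalgebra.centralizer_coe_range_includeLeft_eq_center_tensorProduct]
      exact fun v _ => Subalgebra.mem_center_iff.1 hu v
    obtain ⟨w, rfl⟩ := (AlgHom.mem_range _).1 hu₁
    have hw :
        w ∈ (map (AlgHom.id F (Subalgebra.center F A)) (Subalgebra.center F B).val).range := by
      rw [← Subalgebra.centralizer_range_includeRight_eq_center_tensorProduct]
      rintro _ ⟨y, rfl⟩
      -- `w` commutes with `1 ⊗ y` because its injective image `u` is central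
      apply map_injective_of_injective Subtype.val_injective (f := (Subalgebra.center F A).val)
        (g := AlgHom.id F B) Function.injective_id
      simpa using Subalgebra.mem_center_iff.1 hu ((1 : A) ⊗ₜ y)
    obtain ⟨v, rfl⟩ := (AlgHom.mem_range _).1 hw
    exact (AlgHom.mem_range _).2 ⟨v, by rw [← AlgHom.comp_apply, ← map_comp]; rfl⟩
  · rintro _ ⟨v, rfl⟩
    change map _ _ v ∈ _
    induction v using TensorProduct.induction_on with
    | zero => simp
    | tmul a b =>
      simpa using Subalgebra.mul_mem _
        (includeLeft_map_center_le F A B ⟨a, a.2, rfl⟩)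
        (includeRight_map_center_le F A B ⟨b, b.2, rfl⟩)
    | add v w hv hw => rw [map_add]; exact add_mem hv hw

end Algebra.TensorProduct

theorem isSimpleRing_tensorProduct_of_forall_admissible {F A B A' B' : Type*} [Field F]
    [Ring A] [Algebra F A] [Ring B] [Algebra F B] [Ring A'] [Algebra F A'] [Ring B'] [Algebra F B']
    [Nontrivial (A' ⊗[F] B')] {IA : TwoSidedIdeal A} {IB : TwoSidedIdeal B}
    (hIA₀ : IA ≠ ⊥) (hIA : IA ≠ ⊤) (hIB₀ : IB ≠ ⊥) (hIB : IB ≠ ⊤)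
    (hadm : ∀ J : TwoSidedIdeal (A ⊗[F] B), Admissible F IA IB J)
    {qA : A →ₐ[F] A'} (hqA : Function.Surjective qA)
    (hkerA : ∀ x : A, qA x = 0 ↔ x ∈ IA)
    {qB : B →ₐ[F] B'} (hqB : Function.Surjective qB)
    (hkerB : ∀ y : B, qB y = 0 ↔ y ∈ IB) :
    IsSimpleRing (A' ⊗[F] B') := by
  let q := Algebra.TensorProduct.map qA qB
  obtain ⟨x, hxIA, hx⟩ := SetLike.exists_of_lt (bot_lt_iff_ne_bot.2 hIA₀)
  obtain ⟨y, hyIB, hy⟩ := SetLike.exists_of_lt (bot_lt_iff_ne_bot.2 hIB₀)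
  have hsup : tmulSpan F (IA : Set A) Set.univ ⊔ tmulSpan F Set.univ (IB : Set B) ≤
      LinearMap.ker q.toLinearMap :=
    sup_le (tmulSpan_le_ker _ fun a ha b _ => by simp [q, (hkerA a).2 ha])
      (tmulSpan_le_ker _ fun a _ b hb => by simp [q, (hkerB b).2 hb])
  refine IsSimpleRing.of_surjective_of_ker_le q
    (Algebra.TensorProduct.map_surjective qA qB hqA hqB) fun J hJ => ?_
  have hxJ : x ⊗ₜ[F] (1 : B) ∈ J :=
    hJ ((TwoSidedIdeal.mem_ker q).2 (by simp [q, (hkerA x).2 hxIA]))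
  have hyJ : (1 : A) ⊗ₜ[F] y ∈ J :=
    hJ ((TwoSidedIdeal.mem_ker q).2 (by simp [q, (hkerB y).2 hyIB]))
  refine ((hadm J).eq_top_or_eq_sup hIA hIB (fun h => hx ((TwoSidedIdeal.mem_bot A).2 h))
    (fun h => hy ((TwoSidedIdeal.mem_bot B).2 h)) hxJ hyJ).symm.imp_left fun hJsup => ?_
  refine le_antisymm (fun t ht => (TwoSidedIdeal.mem_ker q).2 ?_) hJ
  rw [← SetLike.mem_coe, hJsup] at ht
  exact hsup ht

theorem isField_center_tensorProduct_center (F A B : Type*) [Field F] [Ring A] [Algebra F A]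
    [Ring B] [Algebra F B] [IsSimpleRing (A ⊗[F] B)] :
    IsField (Subalgebra.center F A ⊗[F] Subalgebra.center F B) := by
  have hinj := Algebra.TensorProduct.map_injective_of_injective
    (f := (Subalgebra.center F A).val) (g := (Subalgebra.center F B).val)
    Subtype.val_injective Subtype.val_injective
  let e := (AlgEquiv.ofInjective _ hinj).trans (Subalgebra.equivOfEq _ _
    (Algebra.TensorProduct.center_eq_range_map_center F A B).symm)
  have hcenter : IsField (Subalgebra.center F (A ⊗[F] B)) := IsSimpleRing.isField_center _
  exact e.toMulEquiv.isField hcenter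

/-- The simple quotients `A/I_A`, `B/I_B` are presented abstractly by surjective algebra
homomorphisms `qA : A → A'`, `qB : B → B'` with kernels `I_A`, `I_B`. -/
theorem center_tensor_center_isField_of_all_ideals_admissible
    (F A B A' B' : Type*) [Field F] [Ring A] [Algebra F A] [Ring B] [Algebra F B]
    [Ring A'] [Algebra F A'] [Ring B'] [Algebra F B']
    (IA : TwoSidedIdeal A) (IB : TwoSidedIdeal B)
    (hA : IsNearlySimpleWith IA) (hB : IsNearlySimpleWith IB)
    (hadm : ∀ J : TwoSidedIdeal (A ⊗[F] B), Admissible F IA IB J)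
    (qA : A →ₐ[F] A') (hqAsurj : Function.Surjective qA)
    (hkerA : ∀ x : A, qA x = 0 ↔ x ∈ IA)
    (qB : B →ₐ[F] B') (hqBsurj : Function.Surjective qB)
    (hkerB : ∀ y : B, qB y = 0 ↔ y ∈ IB) :
    IsField ((Subalgebra.center F A') ⊗[F] (Subalgebra.center F B')) := by
  have : Nontrivial A' := TwoSidedIdeal.nontrivial_of_ne_top hA.2.1 hkerA
  have : Nontrivial B' := TwoSidedIdeal.nontrivial_of_ne_top hB.2.1 hkerB
  have : Nontrivial (A' ⊗[F] B') :=
    Algebra.TensorProduct.nontrivial_of_algebraMap_injective_of_flat_left F A' B'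
      (FaithfulSMul.algebraMap_injective F B')
  have : IsSimpleRing (A' ⊗[F] B') := isSimpleRing_tensorProduct_of_forall_admissible
    hA.1 hA.2.1 hB.1 hB.2.1 hadm hqAsurj hkerA hqBsurj hkerB
  exact isField_center_tensorProduct_center F A' B'
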